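/- arXiv:2103.06339 — 2 statements merged into one kernel-verified Lean document; each statement's English description precedes it below -/
import Mathlib

section
/- Derivative of p·F along an extremal: let f_0,…,f_m : ℝ^n×ℝ^l → ℝ^n and F : ℝ^n×ℝ^l → ℝ^n be C¹, and set f(x,u,v):=f_0(x,u)+Σ_{i=1}^m v_i f_i(x,u). Let x:[0,T]→ℝ^n, u:[0,T]→ℝ^l, p:[0,T]→ℝ^{n,*} and v:[0,T]→ℝ^m, and let t be a point at which x, u and p are differentiable with ẋ(t)=f(x(t),u(t),v(t)) and ṗ(t)=−p(t)·D_xf(x(t),u(t),v(t)). Then s↦p(s)·F(x(s),u(s)) is differentiable at t with derivative p(t)·[f_0,F](x(t),u(t)) + Σ_{i=1}^m v_i(t)·p(t)·[f_i,F](x(t),u(t)) + p(t)·D_uF(x(t),u(t))·u̇(t). -/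
open MeasureTheory Set Matrix

noncomputable section

/-- Lie bracket `[g,h](x,u) = D_x h · g − D_x g · h` (derivatives w.r.t. `x`). -/
def lieBracket {n l : ℕ}
    (g h : (Fin n → ℝ) → (Fin l → ℝ) → (Fin n → ℝ))
    (x : Fin n → ℝ) (u : Fin l → ℝ) : Fin n → ℝ :=
  (fderiv ℝ (fun y => h y u) x) (g x u) - (fderiv ℝ (fun y => g y u) x) (h x u)

/-!
By the product rule, `d/ds (p·F) = ṗ·F + p·(D_xF ẋ + D_uF u̇)`. The costate equation turns `ṗ·F`
into `−p·D_xf F`, and since `ẋ = f₀ + Σ vᵢ fᵢ` and `D_xf = D_xf₀ + Σ vᵢ D_xfᵢ` are affine in `v` with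
the same coefficients, the `x`-derivative terms regroup into `p·[f₀,F] + Σ vᵢ p·[fᵢ,F]`.
-/

section PartialDerivatives

variable {𝕜 : Type*} [NontriviallyNormedField 𝕜]
  {E : Type*} [NormedAddCommGroup E] [NormedSpace 𝕜 E]
  {F : Type*} [NormedAddCommGroup F] [NormedSpace 𝕜 F]
  {G : Type*} [NormedAddCommGroup G] [NormedSpace 𝕜 G]
  {g : E → F → G} {x : E} {u : F}

theorem hasFDerivAt_partial_left (hg : DifferentiableAt 𝕜 (fun z : E × F => g z.1 z.2) (x, u)) :
    HasFDerivAt (fun y => g y u)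
      ((fderiv 𝕜 (fun z : E × F => g z.1 z.2) (x, u)).comp (.inl 𝕜 E F)) x :=
  hg.hasFDerivAt.comp (f := fun y : E => (y, u)) x (hasFDerivAt_prodMk_left x u)

theorem hasFDerivAt_partial_right (hg : DifferentiableAt 𝕜 (fun z : E × F => g z.1 z.2) (x, u)) :
    HasFDerivAt (fun w => g x w)
      ((fderiv 𝕜 (fun z : E × F => g z.1 z.2) (x, u)).comp (.inr 𝕜 E F)) u :=
  hg.hasFDerivAt.comp (f := fun w : F => (x, w)) u (hasFDerivAt_prodMk_right x u)

theorem HasDerivAt.comp_partials {X : 𝕜 → E} {U : 𝕜 → F} {X' : E} {U' : F} {t : 𝕜}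
    (hg : DifferentiableAt 𝕜 (fun z : E × F => g z.1 z.2) (X t, U t))
    (hX : HasDerivAt X X' t) (hU : HasDerivAt U U' t) :
    HasDerivAt (fun s => g (X s) (U s))
      (fderiv 𝕜 (fun y => g y (U t)) (X t) X' + fderiv 𝕜 (fun w => g (X t) w) (U t) U') t := by
  rw [(hasFDerivAt_partial_left hg).fderiv, (hasFDerivAt_partial_right hg).fderiv,
    ContinuousLinearMap.comp_apply, ContinuousLinearMap.comp_apply, ← map_add,
    ContinuousLinearMap.inl_apply, ContinuousLinearMap.inr_apply, Prod.mk_add_mk, add_zero,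
    zero_add]
  exact hg.hasFDerivAt.comp_hasDerivAt t (hX.prodMk hU)

end PartialDerivatives

theorem HasDerivAt.dotProduct {𝕜 ι : Type*} [NontriviallyNormedField 𝕜] [Fintype ι]
    {p q : 𝕜 → ι → 𝕜} {p' q' : ι → 𝕜} {t : 𝕜}
    (hp : HasDerivAt p p' t) (hq : HasDerivAt q q' t) :
    HasDerivAt (fun s => p s ⬝ᵥ q s) (p' ⬝ᵥ q t + p t ⬝ᵥ q') t := by
  rw [_root_.dotProduct, _root_.dotProduct, ← Finset.sum_add_distrib]
  exact HasDerivAt.fun_sum fun j _ => (hasDerivAt_pi.mp hp j).mul (hasDerivAt_pi.mp hq j)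

theorem dotProduct_apply_single_dotProduct {R : Type*} [CommSemiring R] {ι κ : Type*} [Fintype ι]
    [Fintype κ] [DecidableEq ι] {M : Type*} [FunLike M (ι → R) (κ → R)]
    [LinearMapClass M R (ι → R) (κ → R)] (L : M) (q : κ → R) (w : ι → R) :
    (fun j => q ⬝ᵥ L (Pi.single j 1)) ⬝ᵥ w = q ⬝ᵥ L w := by
  conv_rhs => rw [← Finset.univ_sum_single w]
  simp only [map_sum, dotProduct_sum]
  refine Finset.sum_congr rfl fun j _ => ?_
  have hsingle : Pi.single j (w j) = w j • Pi.single j (1 : R) := by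
    rw [← Pi.single_smul', smul_eq_mul, mul_one]
  rw [hsingle, map_smul, dotProduct_smul, smul_eq_mul, mul_comm]

theorem deriv_p_dot_F_along_extremal_general
    (n l m : ℕ)
    (f0 : (Fin n → ℝ) → (Fin l → ℝ) → (Fin n → ℝ))
    (fi : Fin m → (Fin n → ℝ) → (Fin l → ℝ) → (Fin n → ℝ))
    (F : (Fin n → ℝ) → (Fin l → ℝ) → (Fin n → ℝ))
    (hf0 : ContDiff ℝ 1 (fun z : (Fin n → ℝ) × (Fin l → ℝ) => f0 z.1 z.2))
    (hfi : ∀ i, ContDiff ℝ 1 (fun z : (Fin n → ℝ) × (Fin l → ℝ) => fi i z.1 z.2))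
    (hF : ContDiff ℝ 1 (fun z : (Fin n → ℝ) × (Fin l → ℝ) => F z.1 z.2))
    (x : ℝ → Fin n → ℝ) (u : ℝ → Fin l → ℝ) (p : ℝ → Fin n → ℝ) (v : ℝ → Fin m → ℝ)
    (t : ℝ) (u' : Fin l → ℝ)
    (hx : HasDerivAt x (f0 (x t) (u t) + ∑ i, v t i • fi i (x t) (u t)) t)
    (hu : HasDerivAt u u' t)
    (hp : HasDerivAt p
      (fun j => -(p t ⬝ᵥ (fderiv ℝ
        (fun y => f0 y (u t) + ∑ i, v t i • fi i y (u t)) (x t)) (Pi.single j 1))) t) :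
    HasDerivAt (fun s => p s ⬝ᵥ F (x s) (u s))
      (p t ⬝ᵥ lieBracket f0 F (x t) (u t)
        + ∑ i, v t i * (p t ⬝ᵥ lieBracket (fi i) F (x t) (u t))
        + p t ⬝ᵥ (fderiv ℝ (fun w => F (x t) w) (u t)) u') t := by
  have hpartial {G : (Fin n → ℝ) → (Fin l → ℝ) → (Fin n → ℝ)}
      (hG : ContDiff ℝ 1 (fun z : (Fin n → ℝ) × (Fin l → ℝ) => G z.1 z.2)) :
      DifferentiableAt ℝ (fun y => G y (u t)) (x t) :=
    (hasFDerivAt_partial_left (hG.differentiable one_ne_zero _)).differentiableAt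
  have hDf : fderiv ℝ (fun y => f0 y (u t) + ∑ i, v t i • fi i y (u t)) (x t)
      = fderiv ℝ (fun y => f0 y (u t)) (x t)
        + ∑ i, v t i • fderiv ℝ (fun y => fi i y (u t)) (x t) :=
    ((hpartial hf0).hasFDerivAt.add
      (HasFDerivAt.fun_sum fun i _ => (hpartial (hfi i)).hasFDerivAt.const_smul (v t i))).fderiv
  refine (hp.dotProduct (.comp_partials (hF.differentiable one_ne_zero _) hx hu)).congr_deriv ?_
  rw [← Pi.neg_def, neg_dotProduct, dotProduct_apply_single_dotProduct, hDf]
  simp only [lieBracket, map_add, map_sum, map_smul, _root_.add_apply,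
    FunLike.coe_sum, Finset.sum_apply, _root_.smul_apply, dotProduct_add,
    dotProduct_sub, dotProduct_sum, dotProduct_smul, smul_eq_mul, mul_sub, Finset.sum_sub_distrib]
  ring

/-- Derivative of `p·F` along an extremal of the partially-affine dynamics
`f(x,u,v) = f₀(x,u) + Σᵢ vᵢ fᵢ(x,u)`. -/
theorem deriv_p_dot_F_along_extremal
    (n l m : ℕ) (T : ℝ)
    (f0 : (Fin n → ℝ) → (Fin l → ℝ) → (Fin n → ℝ))
    (fi : Fin m → (Fin n → ℝ) → (Fin l → ℝ) → (Fin n → ℝ))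
    (F : (Fin n → ℝ) → (Fin l → ℝ) → (Fin n → ℝ))
    (hf0 : ContDiff ℝ 1 (fun z : (Fin n → ℝ) × (Fin l → ℝ) => f0 z.1 z.2))
    (hfi : ∀ i, ContDiff ℝ 1 (fun z : (Fin n → ℝ) × (Fin l → ℝ) => fi i z.1 z.2))
    (hF : ContDiff ℝ 1 (fun z : (Fin n → ℝ) × (Fin l → ℝ) => F z.1 z.2))
    (x : ℝ → Fin n → ℝ) (u : ℝ → Fin l → ℝ) (p : ℝ → Fin n → ℝ) (v : ℝ → Fin m → ℝ)
    (t : ℝ) (ht : t ∈ Icc (0:ℝ) T) (u' : Fin l → ℝ)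
    (hx : HasDerivAt x (f0 (x t) (u t) + ∑ i, v t i • fi i (x t) (u t)) t)
    (hu : HasDerivAt u u' t)
    (hp : HasDerivAt p
      (fun j => -(p t ⬝ᵥ (fderiv ℝ
        (fun y => f0 y (u t) + ∑ i, v t i • fi i y (u t)) (x t)) (Pi.single j 1))) t) :
    HasDerivAt (fun s => p s ⬝ᵥ F (x s) (u s))
      (p t ⬝ᵥ lieBracket f0 F (x t) (u t)
        + ∑ i, v t i * (p t ⬝ᵥ lieBracket (fi i) F (x t) (u t))
        + p t ⬝ᵥ (fderiv ℝ (fun w => F (x t) w) (u t)) u') t :=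
  deriv_p_dot_F_along_extremal_general n l m f0 fi F hf0 hfi hF x u p v t u' hx hu hp
end
end

section
/- Local convergence of the Gauss–Newton method: let S : ℝ^a → ℝ^b be differentiable with locally Lipschitz derivative, and let ν̂ ∈ ℝ^a satisfy S(ν̂)=0 and suppose the linear map S'(ν̂) is injective. Then there is a neighborhood V of ν̂ such that for every ν_0 ∈ V the Gauss–Newton iterates ν_{k+1} := ν_k − (S'(ν_k)ᵀ S'(ν_k))^{-1} S'(ν_k)ᵀ S(ν_k) are well defined (in particular S'(ν_k)ᵀS'(ν_k) is invertible for every k) and converge to ν̂. If moreover S' is Lipschitz continuous on a neighborhood of ν̂, then the convergence is locally quadratic: there is c>0 such that |ν_{k+1}−ν̂| ≤ c·|ν_k−ν̂|² for all k. -/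
/-!
Write `e = ν - νh` and `P(ν) = (JᵀJ)⁻¹Jᵀ` with `J = S'(ν)`. Since `P(ν)J = 1` and `S(νh) = 0`,
the new error is `P(ν) (J e - (S(ν) - S(νh)))`. The bracket is a first-order Taylor remainder,
bounded by `K‖e‖²` by the mean value inequality when `S'` is `K`-Lipschitz along the segment.
At `νh` the Gram matrix `JᵀJ` is positive definite because `J` is injective, so `P` is continuous,
hence bounded, near `νh`. This gives `‖e⁺‖ ≤ c‖e‖²`, and on a ball of radius at most `1/(2c)` the
error at least halves at every step, so the iterates stay in the ball and converge.
-/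

open Matrix Filter

noncomputable section

/-- Jacobian matrix of a map `S : ℝᵃ → ℝᵇ`. -/
def jacMat {a b : ℕ} (S : (Fin a → ℝ) → (Fin b → ℝ)) (ν : Fin a → ℝ) :
    Matrix (Fin b) (Fin a) ℝ :=
  Matrix.of fun i j => fderiv ℝ S ν (Pi.single j 1) i

/-- One Gauss–Newton step `ν ↦ ν − (S'(ν)ᵀS'(ν))⁻¹ S'(ν)ᵀ S(ν)`. -/
def gaussNewtonStep {a b : ℕ} (S : (Fin a → ℝ) → (Fin b → ℝ)) (ν : Fin a → ℝ) :
    Fin a → ℝ :=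
  ν - ((jacMat S ν)ᵀ * jacMat S ν)⁻¹ *ᵥ ((jacMat S ν)ᵀ *ᵥ S ν)

open Metric Topology
open scoped NNReal

-- Matrices carry the ℓ∞ operator norm, the one induced by the sup norm on `Fin a → ℝ`.
attribute [local instance] Matrix.linftyOpNormedAddCommGroup

theorem norm_sub_sub_fderiv_apply_le {E F : Type*} [NormedAddCommGroup E] [NormedSpace ℝ E]
    [NormedAddCommGroup F] [NormedSpace ℝ F] {f : E → F} {K : ℝ≥0} {x y : E}
    (hf : ∀ z ∈ segment ℝ x y, DifferentiableAt ℝ f z)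
    (hK : LipschitzOnWith K (fderiv ℝ f) (segment ℝ x y)) :
    ‖f y - f x - fderiv ℝ f y (y - x)‖ ≤ K * ‖y - x‖ ^ 2 := by
  have hy : y ∈ segment ℝ x y := right_mem_segment ℝ x y
  have hbound : ∀ z ∈ segment ℝ x y, ‖fderiv ℝ f z - fderiv ℝ f y‖ ≤ K * ‖y - x‖ := by
    intro z hz
    rw [← dist_eq_norm, ← dist_eq_norm']
    calc dist (fderiv ℝ f z) (fderiv ℝ f y) ≤ K * dist z y := hK.dist_le_mul z hz y hy
      _ ≤ K * dist x y := by
        gcongr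
        exact mem_closedBall.mp (segment_subset_closedBall_right x y hz)
  have := (convex_segment x y).norm_image_sub_le_of_norm_hasFDerivWithin_le
    (f := fun u => f u - fderiv ℝ f y u)
    (fun z hz => ((hf z hz).hasFDerivAt.sub (fderiv ℝ f y).hasFDerivAt).hasFDerivWithinAt)
    hbound (left_mem_segment ℝ x y) hy
  calc ‖f y - f x - fderiv ℝ f y (y - x)‖
      = ‖(f y - fderiv ℝ f y y) - (f x - fderiv ℝ f y x)‖ := by rw [map_sub]; abel_nf
    _ ≤ K * ‖y - x‖ * ‖y - x‖ := this
    _ = K * ‖y - x‖ ^ 2 := by ring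

theorem Matrix.isUnit_det_transpose_mul_self {m n : Type*} [Fintype m] [Fintype n]
    [DecidableEq n] (A : Matrix m n ℝ) (hA : Function.Injective A.mulVec) :
    IsUnit (Aᵀ * A).det := by
  rw [← conjTranspose_eq_transpose_of_trivial, ← isUnit_iff_isUnit_det]
  exact (PosDef.conjTranspose_mul_self A hA).isUnit

-- The Moore–Penrose pseudoinverse of `J` when `J` is injective.
def pinv {m n : Type*} [Fintype m] [Fintype n] [DecidableEq n] (J : Matrix m n ℝ) :
    Matrix n m ℝ :=
  (Jᵀ * J)⁻¹ * Jᵀ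

section pinv
variable {m n : Type*} [Fintype m] [Fintype n] [DecidableEq n]

theorem pinv_mul_self {J : Matrix m n ℝ} (hJ : IsUnit (Jᵀ * J).det) : pinv J * J = 1 := by
  rw [pinv, Matrix.mul_assoc, nonsing_inv_mul _ hJ]

theorem continuousAt_pinv {J : Matrix m n ℝ} (hJ : (Jᵀ * J).det ≠ 0) : ContinuousAt pinv J := by
  have hgram : ContinuousAt (fun A : Matrix m n ℝ => (Aᵀ * A)⁻¹) J := by
    refine (continuousAt_matrix_inv _ ?_).comp
      (continuous_id.matrix_transpose.matrix_mul continuous_id).continuousAt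
    rw [Ring.inverse_eq_inv']
    exact continuousAt_inv₀ hJ
  exact (continuous_fst.matrix_mul continuous_snd).continuousAt.comp
    (hgram.prodMk continuous_id.matrix_transpose.continuousAt)

end pinv

section jacMat
variable {a b : ℕ} {S : (Fin a → ℝ) → (Fin b → ℝ)}

theorem jacMat_mulVec (ν v : Fin a → ℝ) :
    jacMat S ν *ᵥ v = fderiv ℝ S ν v :=
  LinearMap.toMatrix'_mulVec (fderiv ℝ S ν : (Fin a → ℝ) →ₗ[ℝ] Fin b → ℝ) v

theorem continuous_jacMat (hS : Continuous (fderiv ℝ S)) : Continuous (jacMat S) :=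
  continuous_matrix fun i j =>
    (continuous_apply i).comp ((ContinuousLinearMap.apply ℝ _ (Pi.single j 1)).continuous.comp hS)

theorem gaussNewtonStep_sub {ν : Fin a → ℝ} (hν : IsUnit ((jacMat S ν)ᵀ * jacMat S ν).det)
    (z : Fin a → ℝ) :
    gaussNewtonStep S ν - z = pinv (jacMat S ν) *ᵥ (jacMat S ν *ᵥ (ν - z) - S ν) := by
  rw [mulVec_sub, mulVec_mulVec, pinv_mul_self hν, one_mulVec, pinv, ← mulVec_mulVec,
    gaussNewtonStep]
  abel

end jacMat

theorem exists_gaussNewtonStep_quadratic {a b : ℕ} {S : (Fin a → ℝ) → (Fin b → ℝ)}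
    (hS : Differentiable ℝ S) (hlip : LocallyLipschitz (fderiv ℝ S)) {νh : Fin a → ℝ}
    (hroot : S νh = 0) (hinj : Function.Injective (fderiv ℝ S νh)) :
    ∃ c > (0 : ℝ), ∃ r > (0 : ℝ), ∀ ν ∈ closedBall νh r,
      IsUnit ((jacMat S ν)ᵀ * jacMat S ν).det ∧
      ‖gaussNewtonStep S ν - νh‖ ≤ c * ‖ν - νh‖ ^ 2 := by
  obtain ⟨K, t, ht, hK⟩ := hlip νh
  have hJ : Continuous (jacMat S) := continuous_jacMat hlip.continuous
  have hdet : ((jacMat S νh)ᵀ * jacMat S νh).det ≠ 0 :=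
    (isUnit_det_transpose_mul_self _ (by rwa [funext (jacMat_mulVec νh)])).ne_zero
  set C := ‖pinv (jacMat S νh)‖ + 1
  have hnear : ∀ᶠ ν in 𝓝 νh, ν ∈ t ∧ ((jacMat S ν)ᵀ * jacMat S ν).det ≠ 0 ∧
      ‖pinv (jacMat S ν)‖ < C :=
    Eventually.and ht <|
      ((hJ.matrix_transpose.matrix_mul hJ).matrix_det.continuousAt.eventually_ne hdet).and
        (((continuousAt_pinv hdet).comp hJ.continuousAt).norm.eventually_lt continuousAt_const
          (lt_add_one _))
  obtain ⟨r, hr, hball⟩ := nhds_basis_closedBall.mem_iff.mp hnear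
  refine ⟨C * K + 1, by positivity, r, hr, fun ν hν => ?_⟩
  obtain ⟨-, hdetν, hCν⟩ := hball hν
  have hunit : IsUnit ((jacMat S ν)ᵀ * jacMat S ν).det := isUnit_iff_ne_zero.mpr hdetν
  have hseg : segment ℝ νh ν ⊆ t := fun z hz =>
    (hball ((convex_closedBall νh r).segment_subset (mem_closedBall_self hr.le) hν hz)).1
  have hres : ‖jacMat S ν *ᵥ (ν - νh) - S ν‖ ≤ K * ‖ν - νh‖ ^ 2 := by
    rw [← norm_neg, jacMat_mulVec, neg_sub, ← sub_zero (S ν), ← hroot]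
    exact norm_sub_sub_fderiv_apply_le (fun z _ => hS z) (hK.mono hseg)
  refine ⟨hunit, ?_⟩
  calc ‖gaussNewtonStep S ν - νh‖
      = ‖pinv (jacMat S ν) *ᵥ (jacMat S ν *ᵥ (ν - νh) - S ν)‖ := by
        rw [gaussNewtonStep_sub hunit]
    _ ≤ ‖pinv (jacMat S ν)‖ * ‖jacMat S ν *ᵥ (ν - νh) - S ν‖ := linfty_opNorm_mulVec _ _
    _ ≤ C * (K * ‖ν - νh‖ ^ 2) := by gcongr
    _ ≤ (C * K + 1) * ‖ν - νh‖ ^ 2 := by nlinarith [sq_nonneg ‖ν - νh‖]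

theorem norm_sub_le_half_pow_of_quadratic {E : Type*} [SeminormedAddCommGroup E] {T : E → E}
    {x : E} {c r : ℝ} (hc : 0 ≤ c) (hcr : c * r ≤ 1 / 2)
    (hT : ∀ w ∈ closedBall x r, ‖T w - x‖ ≤ c * ‖w - x‖ ^ 2) {ν : ℕ → E}
    (h0 : ν 0 ∈ closedBall x r) (hν : ∀ k, ν (k + 1) = T (ν k)) (k : ℕ) :
    ‖ν k - x‖ ≤ (1 / 2) ^ k * ‖ν 0 - x‖ := by
  induction k with
  | zero => simp
  | succ k ih =>
    have hk : ‖ν k - x‖ ≤ r :=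
      ih.trans <| (mul_le_of_le_one_left (norm_nonneg _)
        (pow_le_one₀ (by norm_num) (by norm_num))).trans (mem_closedBall_iff_norm.mp h0)
    calc ‖ν (k + 1) - x‖ ≤ c * ‖ν k - x‖ ^ 2 := hν k ▸ hT _ (mem_closedBall_iff_norm.mpr hk)
      _ = c * ‖ν k - x‖ * ‖ν k - x‖ := by ring
      _ ≤ 1 / 2 * ‖ν k - x‖ := by gcongr; linarith [mul_le_mul_of_nonneg_left hk hc]
      _ ≤ (1 / 2) ^ (k + 1) * ‖ν 0 - x‖ := by
        rw [pow_succ', mul_assoc]; exact mul_le_mul_of_nonneg_left ih (by norm_num)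

/-- Local (quadratic) convergence of the Gauss–Newton method at a zero `νh`
of `S` at which the derivative `S'(νh)` is injective, for `S` differentiable with locally
Lipschitz derivative. -/
theorem gaussNewton_local_convergence
    (a b : ℕ) (S : (Fin a → ℝ) → (Fin b → ℝ))
    (hS : Differentiable ℝ S)
    (hlip : LocallyLipschitz (fderiv ℝ S))
    (νh : Fin a → ℝ) (hroot : S νh = 0)
    (hinj : Function.Injective (fderiv ℝ S νh)) :
    ∃ V ∈ nhds νh, ∃ c > (0:ℝ), ∀ ν₀ ∈ V, ∀ ν : ℕ → Fin a → ℝ,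
      ν 0 = ν₀ → (∀ k, ν (k + 1) = gaussNewtonStep S (ν k)) →
      (∀ k, IsUnit ((jacMat S (ν k))ᵀ * jacMat S (ν k)).det) ∧
      Tendsto ν atTop (nhds νh) ∧
      (∀ k, ‖ν (k + 1) - νh‖ ≤ c * ‖ν k - νh‖ ^ 2) := by
  obtain ⟨c, hc, r, hr, hstep⟩ := exists_gaussNewtonStep_quadratic hS hlip hroot hinj
  set δ := min r (1 / (2 * c))
  have hδ : 0 < δ := lt_min hr (by positivity)
  have hcδ : c * δ ≤ 1 / 2 := by
    calc c * δ ≤ c * (1 / (2 * c)) := by gcongr; exact min_le_right _ _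
      _ = 1 / 2 := by field_simp
  have hstepδ : ∀ w ∈ closedBall νh δ, _ := fun w hw =>
    hstep w (closedBall_subset_closedBall (min_le_left r _) hw)
  refine ⟨ball νh δ, ball_mem_nhds νh hδ, c, hc, fun ν₀ hν₀ ν h0 hν => ?_⟩
  subst h0
  have hcontr := norm_sub_le_half_pow_of_quadratic hc.le hcδ (fun w hw => (hstepδ w hw).2)
    (ball_subset_closedBall hν₀) hν
  have hmem : ∀ k, ν k ∈ closedBall νh δ := fun k => mem_closedBall_iff_norm.mpr <|
    (hcontr k).trans <| (mul_le_of_le_one_left (norm_nonneg _)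
      (pow_le_one₀ (by norm_num) (by norm_num))).trans (mem_ball_iff_norm.mp hν₀).le
  refine ⟨fun k => (hstepδ _ (hmem k)).1, ?_, fun k => hν k ▸ (hstepδ _ (hmem k)).2⟩
  rw [tendsto_iff_norm_sub_tendsto_zero]
  refine squeeze_zero (fun _ => norm_nonneg _) hcontr ?_
  simpa using (tendsto_pow_atTop_nhds_zero_of_lt_one (by norm_num : (0 : ℝ) ≤ 1 / 2)
    (by norm_num)).mul_const ‖ν 0 - νh‖
end
end
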